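/- arXiv:2012.03910 — 3 statements merged into one kernel-verified Lean document; each statement's English description precedes it below -/
import Mathlib

section
/- If two generalized timed traces μ₁ : T₁ → Y and μ₂ : T₂ → Y are Skorokhod conformant with thresholds τ and ε, then they are hybrid conformant with the same thresholds τ and ε. -/
open Set

/-- Hybrid conformance with thresholds τ, ε. -/
def HybridConf {Y : Type*} [MetricSpace Y] (τ ε : ℝ)
    (T₁ : Set ℝ) (μ₁ : ℝ → Y) (T₂ : Set ℝ) (μ₂ : ℝ → Y) : Prop :=
  (∀ t₁ ∈ T₁, ∃ t₂ ∈ T₂, |t₂ - t₁| ≤ τ ∧ dist (μ₂ t₂) (μ₁ t₁) ≤ ε) ∧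
  (∀ t₂ ∈ T₂, ∃ t₁ ∈ T₁, |t₁ - t₂| ≤ τ ∧ dist (μ₁ t₁) (μ₂ t₂) ≤ ε)

/-- Skorokhod conformance with thresholds τ, ε. -/
def SkorConf {Y : Type*} [MetricSpace Y] (τ ε : ℝ)
    (T₁ : Set ℝ) (μ₁ : ℝ → Y) (T₂ : Set ℝ) (μ₂ : ℝ → Y) : Prop :=
  T₁.OrdConnected ∧ T₂.OrdConnected ∧
  ∃ r : T₁ → T₂, StrictMono r ∧ Continuous r ∧ Function.Bijective r ∧
    ∀ t : T₁, |(r t : ℝ) - (t : ℝ)| ≤ τ ∧ dist (μ₁ t) (μ₂ (r t)) ≤ ε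

theorem skorConf_implies_hybridConf {Y : Type*} [MetricSpace Y]
    (τ ε : ℝ) (T₁ T₂ : Set ℝ) (μ₁ μ₂ : ℝ → Y)
    (h : SkorConf τ ε T₁ μ₁ T₂ μ₂) :
    HybridConf τ ε T₁ μ₁ T₂ μ₂ := by
  obtain ⟨-, -, r, -, -, hbij, hr⟩ := h
  constructor
  · intro t₁ ht₁
    exact ⟨r ⟨t₁, ht₁⟩, (r ⟨t₁, ht₁⟩).2, (hr ⟨t₁, ht₁⟩).1,
      by rw [dist_comm]; exact (hr ⟨t₁, ht₁⟩).2⟩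
  · intro t₂ ht₂
    obtain ⟨t₁, ht⟩ := hbij.surjective ⟨t₂, ht₂⟩
    refine ⟨t₁, t₁.2, ?_, ?_⟩
    · have := (hr t₁).1
      rw [ht] at this
      rw [abs_sub_comm]; exact this
    · have := (hr t₁).2
      rw [ht] at this; exact this
end

section
/- Cleanness with synchronized retiming through the identity synchronization function generalizes conformance-based cleanness: for any conformance relation Conf_I induced by a family of retimings and any output conformance Conf_O, there exists a synchronization function Sync (namely Sync(r₁, r₂) = {(id, id)}) such that a deterministic hybrid system H is (Conf_I, Conf_O)-clean if and only if H is (Conf_I, Conf_O)-clean with synchronized retiming through Sync. -/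
open Set

/-- A retiming is a pair of functions between time domains. -/
abbrev Retiming := (ℝ → ℝ) × (ℝ → ℝ)

abbrev ConfRel (Y : Type*) := Set ℝ → (ℝ → Y) → Set ℝ → (ℝ → Y) → Prop

/-- Conformance induced by a family `Ret` of retimings with time threshold τ
and value threshold ε. -/
def IndConf {Y : Type*} [MetricSpace Y] (Ret : Set Retiming) (τ ε : ℝ) :
    ConfRel Y := fun T₁ μ₁ T₂ μ₂ =>
  ∃ p ∈ Ret, Set.MapsTo p.1 T₁ T₂ ∧ Set.MapsTo p.2 T₂ T₁ ∧
    (∀ t ∈ T₁, |p.1 t - t| ≤ τ) ∧ (∀ t ∈ T₂, |p.2 t - t| ≤ τ) ∧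
    (∀ t ∈ T₁, dist (μ₁ t) (μ₂ (p.1 t)) ≤ ε) ∧
    (∀ t ∈ T₂, dist (μ₂ t) (μ₁ (p.2 t)) ≤ ε)

/-- Prefix conformance with time allowance τ. -/
def PrefConf {Y : Type*} (Conf : ConfRel Y) (τ : ℝ)
    (T₁ : Set ℝ) (μ₁ : ℝ → Y) (T₂ : Set ℝ) (μ₂ : ℝ → Y) (t : ℝ) : Prop :=
  ∃ t1s ∈ Icc (0:ℝ) τ ∩ T₁, ∃ t1e ∈ Icc (t - τ) (t + τ) ∩ T₁,
  ∃ t2s ∈ Icc (0:ℝ) τ ∩ T₂, ∃ t2e ∈ Icc (t - τ) (t + τ) ∩ T₂,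
    Conf (T₁ ∩ Icc t1s t1e) μ₁ (T₂ ∩ Icc t2s t2e) μ₂

/-- Retimings witnessing prefix conformance of two traces at time t. -/
def PrefWit {Y : Type*} [MetricSpace Y] (Ret : Set Retiming) (τ ε : ℝ)
    (T₁ : Set ℝ) (μ₁ : ℝ → Y) (T₂ : Set ℝ) (μ₂ : ℝ → Y) (t : ℝ) :
    Set Retiming :=
  {p | ∃ t1s ∈ Icc (0:ℝ) τ ∩ T₁, ∃ t1e ∈ Icc (t - τ) (t + τ) ∩ T₁,
       ∃ t2s ∈ Icc (0:ℝ) τ ∩ T₂, ∃ t2e ∈ Icc (t - τ) (t + τ) ∩ T₂,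
    p ∈ Ret ∧
    Set.MapsTo p.1 (T₁ ∩ Icc t1s t1e) (T₂ ∩ Icc t2s t2e) ∧
    Set.MapsTo p.2 (T₂ ∩ Icc t2s t2e) (T₁ ∩ Icc t1s t1e) ∧
    (∀ s ∈ T₁ ∩ Icc t1s t1e, |p.1 s - s| ≤ τ) ∧
    (∀ s ∈ T₂ ∩ Icc t2s t2e, |p.2 s - s| ≤ τ) ∧
    (∀ s ∈ T₁ ∩ Icc t1s t1e, dist (μ₁ s) (μ₂ (p.1 s)) ≤ ε) ∧
    (∀ s ∈ T₂ ∩ Icc t2s t2e, dist (μ₂ s) (μ₁ (p.2 s)) ≤ ε)}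

/-- Ordinary (Conf_I, Conf_O)-cleanness. -/
def Clean {Y : Type*} (ConfI : ConfRel Y) (τI : ℝ) (ConfO : ConfRel Y) (τO : ℝ)
    (H : Set ℝ → (ℝ → Y) → (ℝ → Y)) : Prop :=
  ∀ (T₁ T₂ : Set ℝ) (i₁ i₂ : ℝ → Y), ∀ t ∈ T₁ ∪ T₂,
    (∀ t' ≤ t, PrefConf ConfI τI T₁ i₁ T₂ i₂ t') →
    PrefConf ConfO τO T₁ (H T₁ i₁) T₂ (H T₂ i₂) t

/-- Cleanness with synchronized retiming through Sync. -/
def SyncClean {Y : Type*} [MetricSpace Y] (Ret : Set Retiming) (τI εI : ℝ)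
    (ConfO : ConfRel Y) (τO : ℝ) (Sync : Retiming → Set Retiming)
    (H : Set ℝ → (ℝ → Y) → (ℝ → Y)) : Prop :=
  ∀ (T₁ T₂ : Set ℝ) (i₁ i₂ : ℝ → Y), ∀ t ∈ T₁ ∪ T₂,
    (∀ t' ≤ t, PrefConf (IndConf Ret τI εI) τI T₁ i₁ T₂ i₂ t') →
    ∃ p ∈ PrefWit Ret τI εI T₁ i₁ T₂ i₂ t, ∃ q ∈ Sync p,
      PrefConf ConfO τO T₁ (H T₁ i₁ ∘ q.2) T₂ (H T₂ i₂) t ∧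
      PrefConf ConfO τO T₁ (H T₁ i₁) T₂ (H T₂ i₂ ∘ q.1) t

/-- Cleanness with synchronized retiming through the identity synchronization
function generalizes conformance-based cleanness. -/
theorem clean_iff_syncClean_id {Y : Type*} [MetricSpace Y]
    (Ret : Set Retiming) (τI εI τO : ℝ) (ConfO : ConfRel Y)
    (H : Set ℝ → (ℝ → Y) → (ℝ → Y)) :
    Clean (IndConf Ret τI εI) τI ConfO τO H ↔
      SyncClean Ret τI εI ConfO τO (fun _ => {((id : ℝ → ℝ), (id : ℝ → ℝ))}) H := by
  constructor
  · intro hC T₁ T₂ i₁ i₂ t ht hpre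
    obtain ⟨t1s, h1s, t1e, h1e, t2s, h2s, t2e, h2e, p, hpRet, hm1, hm2, hb1, hb2, hd1, hd2⟩ :=
      hpre t le_rfl
    refine ⟨p, ⟨t1s, h1s, t1e, h1e, t2s, h2s, t2e, h2e, hpRet, hm1, hm2, hb1, hb2, hd1, hd2⟩,
      (id, id), rfl, ?_, ?_⟩ <;>
      simpa [Function.comp_id] using hC T₁ T₂ i₁ i₂ t ht hpre
  · intro hS T₁ T₂ i₁ i₂ t ht hpre
    obtain ⟨p, _, q, hq, hout, -⟩ := hS T₁ T₂ i₁ i₂ t ht hpre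
    simp only [Set.mem_singleton_iff] at hq
    subst hq
    simpa [Function.comp_id] using hout
end

section
/- Composition of conformance relations bounds value error additively: if Conf^{Ret⁽¹⁾}_{τ₁,ε₁}(μ₁, μ₂) holds witnessed by a retiming in Ret⁽¹⁾_{τ₁} and Conf^{Ret⁽²⁾}_{τ₂,ε₂}(μ₂, μ₃) holds witnessed by a retiming in Ret⁽²⁾_{τ₂}, then the composed retiming witnesses that for all t ∈ dom(μ₁), d(μ₁(t), μ₃(r₁⁽²⁾(r₁⁽¹⁾(t)))) ≤ ε₁ + ε₂, and for all t ∈ dom(μ₃), d(μ₃(t), μ₁(r₂⁽¹⁾(r₂⁽²⁾(t)))) ≤ ε₁ + ε₂; hence Conf^{Ret⁽²⁾_{τ₂} ∘ Ret⁽¹⁾_{τ₁}}_{∞, ε₁+ε₂}(μ₁, μ₃) holds. -/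
open Set

/-- Composition of conformance relations bounds the value error additively:
if (r11, r21) witnesses conformance of μ₁ and μ₂ with thresholds τ₁, ε₁ and
(r12, r22) witnesses conformance of μ₂ and μ₃ with thresholds τ₂, ε₂, then
the composed retiming witnesses conformance (with unbounded time deviation)
of μ₁ and μ₃ with value threshold ε₁ + ε₂. -/
theorem conf_comp {Y : Type*} [MetricSpace Y]
    (τ₁ τ₂ ε₁ ε₂ : ℝ) (T₁ T₂ T₃ : Set ℝ) (μ₁ μ₂ μ₃ : ℝ → Y)
    (r11 r21 r12 r22 : ℝ → ℝ)
    (hm11 : Set.MapsTo r11 T₁ T₂) (hm21 : Set.MapsTo r21 T₂ T₁)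
    (hτ11 : ∀ t ∈ T₁, |r11 t - t| ≤ τ₁) (hτ21 : ∀ t ∈ T₂, |r21 t - t| ≤ τ₁)
    (hd11 : ∀ t ∈ T₁, dist (μ₁ t) (μ₂ (r11 t)) ≤ ε₁)
    (hd21 : ∀ t ∈ T₂, dist (μ₂ t) (μ₁ (r21 t)) ≤ ε₁)
    (hm12 : Set.MapsTo r12 T₂ T₃) (hm22 : Set.MapsTo r22 T₃ T₂)
    (hτ12 : ∀ t ∈ T₂, |r12 t - t| ≤ τ₂) (hτ22 : ∀ t ∈ T₃, |r22 t - t| ≤ τ₂)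
    (hd12 : ∀ t ∈ T₂, dist (μ₂ t) (μ₃ (r12 t)) ≤ ε₂)
    (hd22 : ∀ t ∈ T₃, dist (μ₃ t) (μ₂ (r22 t)) ≤ ε₂) :
    Set.MapsTo (r12 ∘ r11) T₁ T₃ ∧ Set.MapsTo (r21 ∘ r22) T₃ T₁ ∧
    (∀ t ∈ T₁, dist (μ₁ t) (μ₃ (r12 (r11 t))) ≤ ε₁ + ε₂) ∧
    (∀ t ∈ T₃, dist (μ₃ t) (μ₁ (r21 (r22 t))) ≤ ε₁ + ε₂) := by
  refine ⟨hm12.comp hm11, hm21.comp hm22, ?_, ?_⟩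
  · intro t ht
    calc dist (μ₁ t) (μ₃ (r12 (r11 t)))
        ≤ dist (μ₁ t) (μ₂ (r11 t)) + dist (μ₂ (r11 t)) (μ₃ (r12 (r11 t))) :=
          dist_triangle _ _ _
      _ ≤ ε₁ + ε₂ := add_le_add (hd11 t ht) (hd12 _ (hm11 ht))
  · intro t ht
    calc dist (μ₃ t) (μ₁ (r21 (r22 t)))
        ≤ dist (μ₃ t) (μ₂ (r22 t)) + dist (μ₂ (r22 t)) (μ₁ (r21 (r22 t))) :=
          dist_triangle _ _ _
      _ ≤ ε₂ + ε₁ := add_le_add (hd22 t ht) (hd21 _ (hm22 ht))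
      _ = ε₁ + ε₂ := add_comm _ _
end
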